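/- Let K₀ be the integral operator with kernel K(ξ,η) = ½ e^{−|ξ−η|/2} w′(ξ)w′(η), with w′ ∈ L²(ℝ), and set P = ∫_ℝ (w′(ξ))² dξ. Then every eigenvalue λ of K₀ satisfies 0 ≤ λ ≤ P/2, i.e., the spectrum of K₀ is contained in [0, P/2]. -/

import Mathlib

/-!
The eigenvalue is a Rayleigh quotient: with `f = w' φ`,
`λ = ½ ∫∫ e^{-|ξ-η|/2} f(ξ) f(η)`.
Since `e^{-|ξ-η|/2} ≤ 1`, this is at most `½ (∫ |f|)² ≤ ½ ∫ (w')² ∫ φ² = P/2` by Cauchy–Schwarz.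
For the lower bound, `e^{-|x-y|/2} = ∫ g(t,x) g(t,y) dt` with `g(t,x) = 1_{t ≤ x} e^{(t-x)/2}`,
so by Fubini the double integral equals `∫ (∫ g(t,x) f(x) dx)² dt ≥ 0`.
-/

open MeasureTheory Set

noncomputable section

def chKer (w' : ℝ → ℝ) (ξ η : ℝ) : ℝ :=
  (1 / 2) * Real.exp (-|ξ - η| / 2) * (w' ξ * w' η)

theorem sq_integral_abs_mul_le {α : Type*} [MeasurableSpace α] {μ : Measure α} {f g : α → ℝ}
    (hf : MemLp f 2 μ) (hg : MemLp g 2 μ) :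
    (∫ a, |f a * g a| ∂μ) ^ 2 ≤ (∫ a, f a ^ 2 ∂μ) * ∫ a, g a ^ 2 ∂μ := by
  have two : ENNReal.ofReal 2 = 2 := by norm_num
  have holder := integral_mul_norm_le_Lp_mul_Lq (p := 2) (q := 2) Real.HolderConjugate.two_two
    (two ▸ hf) (two ▸ hg)
  simp only [Real.norm_eq_abs, Real.rpow_two, sq_abs, ← abs_mul] at holder
  rw [← Real.sqrt_eq_rpow, ← Real.sqrt_eq_rpow] at holder
  calc (∫ a, |f a * g a| ∂μ) ^ 2
      ≤ (√(∫ a, f a ^ 2 ∂μ) * √(∫ a, g a ^ 2 ∂μ)) ^ 2 :=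
        pow_le_pow_left₀ (integral_nonneg fun _ => abs_nonneg _) holder 2
    _ = (∫ a, f a ^ 2 ∂μ) * ∫ a, g a ^ 2 ∂μ := by
        rw [mul_pow, Real.sq_sqrt (integral_nonneg fun _ => sq_nonneg _),
          Real.sq_sqrt (integral_nonneg fun _ => sq_nonneg _)]

section BoundedKernel

variable {α : Type*} [MeasurableSpace α] {μ : Measure α} {k : α × α → ℝ} {f : α → ℝ}

theorem integrable_kernel_mul_prod (hk : AEStronglyMeasurable k (μ.prod μ))
    (hk_le : ∀ p, |k p| ≤ 1) (hf : Integrable f μ) :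
    Integrable (fun p => k p * (f p.1 * f p.2)) (μ.prod μ) :=
  (hf.mul_prod hf).bdd_mul hk (ae_of_all _ hk_le)

theorem integral_kernel_mul_prod_le [SFinite μ] (hk : AEStronglyMeasurable k (μ.prod μ))
    (hk_le : ∀ p, |k p| ≤ 1) (hf : Integrable f μ) :
    ∫ p, k p * (f p.1 * f p.2) ∂(μ.prod μ) ≤ (∫ x, |f x| ∂μ) ^ 2 := by
  have hpointwise : ∀ p : α × α, k p * (f p.1 * f p.2) ≤ |f p.1| * |f p.2| := fun p =>
    calc k p * (f p.1 * f p.2) ≤ |k p| * (|f p.1| * |f p.2|) := by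
          rw [← abs_mul, ← abs_mul]; exact le_abs_self _
      _ ≤ |f p.1| * |f p.2| := mul_le_of_le_one_left (by positivity) (hk_le p)
  calc ∫ p, k p * (f p.1 * f p.2) ∂(μ.prod μ)
      ≤ ∫ p, |f p.1| * |f p.2| ∂(μ.prod μ) :=
        integral_mono (integrable_kernel_mul_prod hk hk_le hf) (hf.abs.mul_prod hf.abs) hpointwise
    _ = (∫ x, |f x| ∂μ) ^ 2 := by rw [integral_prod_mul (fun x => |f x|) (fun x => |f x|), sq]

end BoundedKernel

theorem integral_gram_kernel_mul_prod_nonneg {α τ : Type*} [MeasurableSpace α]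
    [MeasurableSpace τ] {μ : Measure α} {ν : Measure τ} [SFinite μ] [SFinite ν]
    {g : τ → α → ℝ} {f : α → ℝ}
    (hint : Integrable (fun q : (α × α) × τ => g q.2 q.1.1 * f q.1.1 * (g q.2 q.1.2 * f q.1.2))
      ((μ.prod μ).prod ν)) :
    0 ≤ ∫ p, (∫ t, g t p.1 * g t p.2 ∂ν) * (f p.1 * f p.2) ∂(μ.prod μ) := by
  calc 0 ≤ ∫ t, (∫ x, g t x * f x ∂μ) ^ 2 ∂ν := integral_nonneg fun _ => sq_nonneg _
    _ = ∫ t, ∫ p, g t p.1 * f p.1 * (g t p.2 * f p.2) ∂(μ.prod μ) ∂ν := by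
        congr 1 with t
        rw [sq]
        exact (integral_prod_mul (fun x => g t x * f x) (fun x => g t x * f x)).symm
    _ = ∫ p, ∫ t, g t p.1 * f p.1 * (g t p.2 * f p.2) ∂ν ∂(μ.prod μ) :=
        (integral_integral_swap hint).symm
    _ = _ := by
        refine integral_congr_ae (ae_of_all _ fun p => ?_)
        dsimp only
        rw [← integral_mul_const]
        exact integral_congr_ae (ae_of_all _ fun t => by ring)

def expTail (t x : ℝ) : ℝ := if t ≤ x then Real.exp ((t - x) / 2) else 0

theorem expTail_nonneg (t x : ℝ) : 0 ≤ expTail t x := by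
  unfold expTail; split <;> positivity

theorem measurable_uncurry_expTail : Measurable (Function.uncurry expTail) :=
  Measurable.ite (measurableSet_le measurable_fst measurable_snd)
    ((measurable_fst.sub measurable_snd).div_const 2).exp measurable_const

theorem expTail_mul_expTail (x y : ℝ) :
    (fun t => expTail t x * expTail t y)
      = (Iic (min x y)).indicator (fun t => Real.exp t * Real.exp (-((x + y) / 2))) := by
  funext t
  by_cases hx : t ≤ x <;> by_cases hy : t ≤ y
  · rw [indicator_of_mem (show t ∈ Iic (min x y) from le_min hx hy)]
    simp only [expTail, hx, hy, if_true, ← Real.exp_add]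
    ring_nf
  all_goals simp [expTail, hx, hy]

theorem integral_expTail_mul_expTail (x y : ℝ) :
    ∫ t, expTail t x * expTail t y = Real.exp (-|x - y| / 2) := by
  rw [expTail_mul_expTail, integral_indicator measurableSet_Iic, integral_mul_const,
    integral_exp_Iic, ← Real.exp_add]
  congr 1
  rcases le_total x y with h | h
  · rw [min_eq_left h, abs_of_nonpos (by linarith)]; ring
  · rw [min_eq_right h, abs_of_nonneg (by linarith)]; ring

theorem integrable_expTail_mul_expTail (x y : ℝ) :
    Integrable (fun t => expTail t x * expTail t y) := by
  rw [expTail_mul_expTail]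
  exact IntegrableOn.integrable_indicator ((integrableOn_exp_Iic _).mul_const _) measurableSet_Iic

section ExpKernel

variable {μ : Measure ℝ} {f : ℝ → ℝ}

theorem aestronglyMeasurable_exp_neg_abs_sub :
    AEStronglyMeasurable (fun p : ℝ × ℝ => Real.exp (-|p.1 - p.2| / 2)) (μ.prod μ) :=
  (by fun_prop : Continuous fun p : ℝ × ℝ => Real.exp (-|p.1 - p.2| / 2)).aestronglyMeasurable

theorem abs_exp_neg_abs_sub_le_one (p : ℝ × ℝ) : |Real.exp (-|p.1 - p.2| / 2)| ≤ 1 := by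
  rw [abs_of_pos (Real.exp_pos _), Real.exp_le_one_iff]
  linarith [abs_nonneg (p.1 - p.2)]

theorem integrable_expTail_gram [SFinite μ] (hf : Integrable f μ) :
    Integrable
      (fun q : (ℝ × ℝ) × ℝ => expTail q.2 q.1.1 * f q.1.1 * (expTail q.2 q.1.2 * f q.1.2))
      ((μ.prod μ).prod volume) := by
  have hmeas : AEStronglyMeasurable
      (fun q : (ℝ × ℝ) × ℝ => expTail q.2 q.1.1 * f q.1.1 * (expTail q.2 q.1.2 * f q.1.2))
      ((μ.prod μ).prod volume) := by
    have hg₁ : AEStronglyMeasurable (fun q : (ℝ × ℝ) × ℝ => expTail q.2 q.1.1)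
        ((μ.prod μ).prod volume) := (measurable_uncurry_expTail.comp
      (measurable_snd.prodMk (measurable_fst.comp measurable_fst))).aestronglyMeasurable
    have hg₂ : AEStronglyMeasurable (fun q : (ℝ × ℝ) × ℝ => expTail q.2 q.1.2)
        ((μ.prod μ).prod volume) := (measurable_uncurry_expTail.comp
      (measurable_snd.prodMk (measurable_snd.comp measurable_fst))).aestronglyMeasurable
    exact (hg₁.mul hf.1.comp_fst.comp_fst).mul (hg₂.mul hf.1.comp_snd.comp_fst)
  refine (integrable_prod_iff hmeas).mpr ⟨ae_of_all _ fun p => ?_, ?_⟩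
  · simpa only [mul_mul_mul_comm] using
      (integrable_expTail_mul_expTail p.1 p.2).mul_const (f p.1 * f p.2)
  · have hnorm_integral : ∀ p : ℝ × ℝ,
        ∫ t, ‖expTail t p.1 * f p.1 * (expTail t p.2 * f p.2)‖
          = Real.exp (-|p.1 - p.2| / 2) * (|f p.1| * |f p.2|) := fun p => by
      simp only [Real.norm_eq_abs, abs_mul, abs_of_nonneg (expTail_nonneg _ _),
        mul_mul_mul_comm _ |f p.1|]
      rw [integral_mul_const, integral_expTail_mul_expTail]
    simpa only [hnorm_integral] using integrable_kernel_mul_prod (f := fun x => |f x|)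
      aestronglyMeasurable_exp_neg_abs_sub abs_exp_neg_abs_sub_le_one hf.abs

theorem integral_exp_neg_abs_sub_mul_prod_nonneg [SFinite μ] (hf : Integrable f μ) :
    0 ≤ ∫ p, Real.exp (-|p.1 - p.2| / 2) * (f p.1 * f p.2) ∂(μ.prod μ) := by
  simpa only [integral_expTail_mul_expTail] using
    integral_gram_kernel_mul_prod_nonneg (integrable_expTail_gram hf)

end ExpKernel

theorem eigenvalue_eq_half_integral {w' φ : ℝ → ℝ} {lam : ℝ}
    (hf : Integrable (fun x => w' x * φ x)) (hnorm : ∫ x, φ x ^ 2 = 1)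
    (heig : ∀ᵐ ξ, ∫ η, chKer w' ξ η * φ η = lam * φ ξ) :
    lam = 1 / 2 * ∫ p, Real.exp (-|p.1 - p.2| / 2) * (w' p.1 * φ p.1 * (w' p.2 * φ p.2))
      ∂((volume : Measure ℝ).prod volume) := by
  have hint := (integrable_kernel_mul_prod aestronglyMeasurable_exp_neg_abs_sub
    abs_exp_neg_abs_sub_le_one hf).const_mul (1 / 2)
  calc lam = lam * ∫ x, φ x ^ 2 := by rw [hnorm, mul_one]
    _ = ∫ ξ, (∫ η, chKer w' ξ η * φ η) * φ ξ := by
        rw [← integral_const_mul]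
        refine integral_congr_ae ?_
        filter_upwards [heig] with ξ hξ
        rw [hξ]; ring
    _ = ∫ ξ, ∫ η, 1 / 2 * (Real.exp (-|ξ - η| / 2) * (w' ξ * φ ξ * (w' η * φ η))) := by
        congr 1 with ξ
        rw [← integral_mul_const]
        congr 1 with η
        simp only [chKer]; ring
    _ = _ := by rw [integral_integral hint, integral_const_mul]

/-- every eigenvalue of the operator with kernel
`½ e^{−|ξ−η|/2} w'(ξ)w'(η)` lies in `[0, P/2]` where `P = ∫ (w')²`. -/
theorem camassaHolm_spectrum_bound
    (w' φ : ℝ → ℝ)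
    (hw : MemLp w' 2 (volume : Measure ℝ))
    (hφ : MemLp φ 2 (volume : Measure ℝ))
    (hnorm : ∫ x : ℝ, φ x ^ 2 = 1)
    (lam : ℝ)
    (heig : ∀ᵐ ξ : ℝ, ∫ η : ℝ, chKer w' ξ η * φ η = lam * φ ξ) :
    0 ≤ lam ∧ lam ≤ (∫ x : ℝ, w' x ^ 2) / 2 := by
  have hf : Integrable (fun x => w' x * φ x) := hw.integrable_mul hφ
  rw [eigenvalue_eq_half_integral hf hnorm heig]
  refine ⟨mul_nonneg (by norm_num) (integral_exp_neg_abs_sub_mul_prod_nonneg hf), ?_⟩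
  have h_kernel_le := integral_kernel_mul_prod_le aestronglyMeasurable_exp_neg_abs_sub
    abs_exp_neg_abs_sub_le_one hf
  have h_cauchy_schwarz := sq_integral_abs_mul_le hw hφ
  rw [hnorm, mul_one] at h_cauchy_schwarz
  linarith
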